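/- Let (X,d) be a separable metric space, 1 ≤ p < ∞, and μ ∈ P_p(X). Let Y_1, Y_2, … be i.i.d. X-valued random elements with common distribution μ, and let bar μ_n := (1/n)∑_{i=1}^n δ_{Y_i}. Then, almost surely, Ls_n F_p(bar μ_n) ⊆ F_p(μ) and Ls_n F_p^*(bar μ_n) ⊆ F_p^*(μ); i.e., the strong law of large numbers for Fréchet p-means and restricted Fréchet p-means holds in the Kuratowski upper topology. -/

import Mathlib

open MeasureTheory Filter Topology ProbabilityTheory

/-- `f_p(μ,x) := ∫ d(x,y)^p dμ(y)`. -/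
noncomputable def fp {X : Type*} [MetricSpace X] [MeasurableSpace X]
    (p : ℝ) (μ : Measure X) (x : X) : ℝ :=
  ∫ y, dist x y ^ p ∂μ

/-- Membership in `P_p(X)`. -/
def MemPp {X : Type*} [MetricSpace X] [MeasurableSpace X] (p : ℝ) (μ : Measure X) : Prop :=
  ∀ x : X, Integrable (fun y => dist x y ^ p) μ

/-- Weak convergence of a sequence of Borel measures. -/
def WeakConv {X : Type*} [MetricSpace X] [MeasurableSpace X]
    (μs : ℕ → Measure X) (μ : Measure X) : Prop :=
  ∀ g : BoundedContinuousFunction X ℝ,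
    Tendsto (fun n => ∫ y, g y ∂(μs n)) atTop (𝓝 (∫ y, g y ∂μ))

/-- Convergence in `τ_w^p`. -/
def TauWp {X : Type*} [MetricSpace X] [MeasurableSpace X]
    (p : ℝ) (μs : ℕ → Measure X) (μ : Measure X) : Prop :=
  WeakConv μs μ ∧ ∀ x : X, Tendsto (fun n => fp p (μs n) x) atTop (𝓝 (fp p μ x))

/-- Joint Fréchet p-mean `F_p(μ,C)`. -/
def Fp {X : Type*} [MetricSpace X] [MeasurableSpace X]
    (p : ℝ) (μ : Measure X) (C : Set X) : Set X :=
  {x ∈ C | ∀ x' ∈ C, fp p μ x ≤ fp p μ x'}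

/-- Support of a measure. -/
def msupport {X : Type*} [MetricSpace X] [MeasurableSpace X] (μ : Measure X) : Set X :=
  {x : X | ∀ U : Set X, IsOpen U → x ∈ U → 0 < μ U}

/-- Kuratowski upper limit. -/
def KurLs {X : Type*} [MetricSpace X] (C : ℕ → Set X) : Set X :=
  ⋂ n, closure (⋃ m, ⋃ (_ : n ≤ m), C m)

/-- Kuratowski lower limit. -/
def KurLi {X : Type*} [MetricSpace X] (C : ℕ → Set X) : Set X :=
  {x : X | ∀ ε : ℝ, 0 < ε → ∀ᶠ n in atTop, ∃ y ∈ C n, dist x y < ε}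

/-- One-sided Hausdorff distance `ρ(C,C') = max_{x ∈ C} min_{x' ∈ C'} d(x,x')`. -/
noncomputable def rho {X : Type*} [MetricSpace X] (C C' : Set X) : ℝ :=
  ⨆ x ∈ C, Metric.infDist x C'

/-- Empirical measure of the first `n` samples. -/
noncomputable def empMeasure {X Ω : Type*} [MeasurableSpace X]
    (Y : ℕ → Ω → X) (n : ℕ) (ω : Ω) : Measure X :=
  (n : ENNReal)⁻¹ • ∑ i ∈ Finset.range n, Measure.dirac (Y i ω)

/-- Effros σ-algebra on subsets of `X`. -/
def effros (X : Type*) [TopologicalSpace X] : MeasurableSpace (Set X) :=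
  MeasurableSpace.generateFrom
    {S : Set (Set X) | ∃ U : Set X, IsOpen U ∧ S = {C : Set X | (C ∩ U).Nonempty}}

/-- The relation `x ⇝_μ x'`. -/
def LeadsTo {X : Type*} [MetricSpace X] [MeasurableSpace X] (μ : Measure X) (x x' : X) : Prop :=
  ∃ ε₀ > (0 : ℝ), ∀ ε : ℝ, 0 < ε → ε ≤ ε₀ →
    ∃ φ : X → X, Set.MapsTo φ (Metric.ball x ε) (Metric.ball x' ε) ∧
      Measurable ((Metric.ball x ε).restrict φ) ∧
      ∀ z ∈ Metric.ball x ε, ∀ᵐ y ∂μ, dist (φ z) y = dist z y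

/-- The equivalence relation `x ∼_μ x'`. -/
def SimEq {X : Type*} [MetricSpace X] [MeasurableSpace X] (μ : Measure X) (x x' : X) : Prop :=
  LeadsTo μ x x' ∧ LeadsTo μ x' x

/-- The equivalence class `[x]_μ`. -/
def eqClass {X : Type*} [MetricSpace X] [MeasurableSpace X] (μ : Measure X) (x : X) : Set X :=
  {x' : X | SimEq μ x x'}

/-! For a probability measure `ν`, Minkowski's inequality makes `x ↦ f_p(ν, x) ^ (1/p)`, the
`L^p(ν)`-norm of `d(x, ·)`, 1-Lipschitz. By the strong law of large numbers, almost surely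
`f_p(μ̄_n, q) → f_p(μ, q)` for every `q` in a countable dense set, and equi-Lipschitz continuity
upgrades this to continuous convergence: `f_p(μ̄_n, x_n) → f_p(μ, x)` whenever `x_n → x`.
Minimizers then pass to the limit: cluster points of minimizers over `C_n` minimize over any `C`
with `Ls C_n ⊆ C ⊆ Li C_n`. For `C_n = supp μ̄_n` and `C = supp μ` both inclusions hold almost
surely, because the samples lie in `supp μ` and eventually hit every basic open set of positive
`μ`-mass. -/

open Metric Set

section ContinuousConvergence

variable {ι X : Type*} [MetricSpace X] {l : Filter ι}

lemma tendsto_uncurry_of_lipschitzWith_of_dense {g : ι → X → ℝ} {G : X → ℝ} {K : NNReal}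
    (hg : ∀ i, LipschitzWith K (g i)) (hG : Continuous G) {D : Set X} (hD : Dense D)
    (hconv : ∀ q ∈ D, Tendsto (fun i => g i q) l (𝓝 (G q))) (x : X) :
    Tendsto (fun z : ι × X => g z.1 z.2) (l ×ˢ 𝓝 x) (𝓝 (G x)) := by
  have hclosed := (LipschitzWith.uniformEquicontinuous g K hg).equicontinuous
    |>.isClosed_setOfPred_tendsto (l := l) hG
  have hx : Tendsto (fun i => g i x) l (𝓝 (G x)) :=
    closure_minimal hconv hclosed (hD.closure_eq ▸ mem_univ x)
  have hbound : ∀ z : ι × X, dist (g z.1 z.2) (G x) ≤ K * dist z.2 x + dist (g z.1 x) (G x) :=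
    fun z => (dist_triangle _ _ _).trans (add_le_add_left ((hg z.1).dist_le_mul _ _) _)
  have hlim : Tendsto (fun z : ι × X => K * dist z.2 x + dist (g z.1 x) (G x)) (l ×ˢ 𝓝 x)
      (𝓝 (K * dist x x + dist (G x) (G x))) :=
    ((tendsto_snd.dist tendsto_const_nhds).const_mul _).add
      ((hx.comp tendsto_fst).dist tendsto_const_nhds)
  rw [tendsto_iff_dist_tendsto_zero]
  exact squeeze_zero (fun _ => dist_nonneg) hbound (by simpa [dist_self] using hlim)

end ContinuousConvergence

section FrechetFunction

variable {X : Type*} [MetricSpace X] [MeasurableSpace X] {p : ℝ} {μ : Measure X}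

lemma fp_nonneg (p : ℝ) (μ : Measure X) (x : X) : 0 ≤ fp p μ x :=
  integral_nonneg fun _ => Real.rpow_nonneg dist_nonneg p

variable [OpensMeasurableSpace X]

lemma memLp_dist (hp : 0 < p) (hμ : MemPp p μ) (x : X) :
    MemLp (fun y => dist x y) (ENNReal.ofReal p) μ := by
  rw [← integrable_norm_rpow_iff (by fun_prop) (by simpa using hp) ENNReal.ofReal_ne_top,
    ENNReal.toReal_ofReal hp.le]
  simpa only [Real.norm_of_nonneg dist_nonneg] using hμ x

lemma fp_rpow_inv_eq_toReal_eLpNorm (hp : 0 < p) (hμ : MemPp p μ) (x : X) :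
    fp p μ x ^ p⁻¹ = (eLpNorm (fun y => dist x y) (ENNReal.ofReal p) μ).toReal := by
  rw [(memLp_dist hp hμ x).eLpNorm_eq_integral_rpow_norm (by simpa using hp)
    ENNReal.ofReal_ne_top, ENNReal.toReal_ofReal hp.le,
    ENNReal.toReal_ofReal (Real.rpow_nonneg (integral_nonneg fun _ => by positivity) _)]
  simp only [fp, Real.norm_of_nonneg dist_nonneg]

lemma eLpNorm_dist_le_add (hp : 1 ≤ p) [IsProbabilityMeasure μ] (x x' : X) :
    eLpNorm (fun y => dist x y) (ENNReal.ofReal p) μ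
      ≤ eLpNorm (fun y => dist x' y) (ENNReal.ofReal p) μ + ENNReal.ofReal (dist x x') :=
  calc eLpNorm (fun y => dist x y) (ENNReal.ofReal p) μ
      ≤ eLpNorm (fun y => dist x' y + dist x x') (ENNReal.ofReal p) μ := by
        refine eLpNorm_mono fun y => ?_
        rw [Real.norm_of_nonneg dist_nonneg, Real.norm_of_nonneg (by positivity)]
        linarith [dist_triangle x x' y]
    _ ≤ eLpNorm (fun y => dist x' y) (ENNReal.ofReal p) μ
        + eLpNorm (fun _ => dist x x') (ENNReal.ofReal p) μ :=
        eLpNorm_add_le (by fun_prop) (by fun_prop) (by simpa using hp)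
    _ = _ := by
        rw [eLpNorm_const _ (by simpa using zero_lt_one.trans_le hp)
          (IsProbabilityMeasure.ne_zero μ)]
        simp [Real.enorm_of_nonneg dist_nonneg]

lemma lipschitzWith_fp_rpow_inv (hp : 1 ≤ p) [IsProbabilityMeasure μ] (hμ : MemPp p μ) :
    LipschitzWith 1 (fun x => fp p μ x ^ p⁻¹) := by
  have hp0 : 0 < p := zero_lt_one.trans_le hp
  refine LipschitzWith.of_le_add fun x x' => ?_
  have hfin := (memLp_dist hp0 hμ x').eLpNorm_ne_top
  rw [fp_rpow_inv_eq_toReal_eLpNorm hp0 hμ, fp_rpow_inv_eq_toReal_eLpNorm hp0 hμ,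
    ← ENNReal.toReal_ofReal (dist_nonneg (x := x) (y := x')),
    ← ENNReal.toReal_add hfin ENNReal.ofReal_ne_top]
  exact ENNReal.toReal_mono (ENNReal.add_ne_top.2 ⟨hfin, ENNReal.ofReal_ne_top⟩)
    (eLpNorm_dist_le_add hp x x')

lemma tendsto_fp_uncurry_of_tendsto_on_dense {ι : Type*} (hp : 1 ≤ p) {l : Filter ι}
    {ν : ι → Measure X} (hνprob : ∀ i, IsProbabilityMeasure (ν i)) (hν : ∀ i, MemPp p (ν i))
    [IsProbabilityMeasure μ] (hμ : MemPp p μ) {D : Set X} (hD : Dense D)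
    (hconv : ∀ q ∈ D, Tendsto (fun i => fp p (ν i) q) l (𝓝 (fp p μ q))) (x : X) :
    Tendsto (fun z : ι × X => fp p (ν z.1) z.2) (l ×ˢ 𝓝 x) (𝓝 (fp p μ x)) := by
  have hp0 : p ≠ 0 := (zero_lt_one.trans_le hp).ne'
  have hroot := tendsto_uncurry_of_lipschitzWith_of_dense
    (g := fun i x => fp p (ν i) x ^ p⁻¹) (fun i => lipschitzWith_fp_rpow_inv hp (hν i))
    (lipschitzWith_fp_rpow_inv hp hμ).continuous hD
    (fun q hq => (hconv q hq).rpow_const (Or.inr (by positivity))) x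
  have hpow := (hroot.rpow_const (p := p) (Or.inr (zero_le_one.trans hp)))
  simpa only [Real.rpow_inv_rpow (fp_nonneg _ _ _) hp0] using hpow

end FrechetFunction

section Kuratowski

variable {X : Type*} [MetricSpace X]

lemma kurLs_mono {A B : ℕ → Set X} (h : ∀ n, A n ⊆ B n) : KurLs A ⊆ KurLs B :=
  iInter_mono fun _ => closure_mono (iUnion₂_mono fun m _ => h m)

lemma kurLs_subset_of_isClosed {A : ℕ → Set X} {C : Set X} (hC : IsClosed C)
    (h : ∀ n, A n ⊆ C) : KurLs A ⊆ C :=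
  (iInter_subset _ 0).trans (closure_minimal (iUnion₂_subset fun m _ => h m) hC)

lemma subset_kurLi_const (C : Set X) : C ⊆ KurLi (fun _ => C) :=
  fun x hx _ hε => Eventually.of_forall fun _ => ⟨x, hx, by simpa using hε⟩

lemma frequently_of_mem_kurLs {A : ℕ → Set X} {x : X} (hx : x ∈ KurLs A) :
    ∃ᶠ z in atTop ×ˢ 𝓝 x, z.2 ∈ A z.1 := by
  rw [Filter.Frequently, eventually_prod_iff]
  rintro ⟨pa, hpa, pb, hpb, h⟩
  obtain ⟨N, hN⟩ := eventually_atTop.1 hpa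
  obtain ⟨y, hyA, hyb⟩ :=
    ((mem_closure_iff_frequently.1 (mem_iInter.1 hx N)).and_eventually hpb).exists
  obtain ⟨m, hm, hym⟩ : ∃ m, N ≤ m ∧ y ∈ A m := by simpa using hyA
  exact h (hN m hm) hyb hym

lemma eventually_exists_mem_of_mem_kurLi {C : ℕ → Set X} {x : X} (hx : x ∈ KurLi C)
    {U : Set X} (hU : U ∈ 𝓝 x) : ∀ᶠ n in atTop, ∃ y ∈ C n, y ∈ U := by
  obtain ⟨ε, hε, hεU⟩ := Metric.mem_nhds_iff.1 hU
  exact (hx ε hε).mono fun n ⟨y, hyC, hy⟩ => ⟨y, hyC, hεU (mem_ball'.2 hy)⟩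

end Kuratowski

section Deterministic

variable {X : Type*} [MetricSpace X] [MeasurableSpace X] {p : ℝ}

/-- If `x'` beat `x`, a level `c` strictly between `fp μ x'` and `fp μ x` would, for large `n`,
lie below `fp (ν n)` near `x` and above it at points of `C n` near `x'`. -/
theorem kurLs_Fp_subset {ν : ℕ → Measure X} {μ : Measure X}
    (hconv : ∀ x, Tendsto (fun z : ℕ × X => fp p (ν z.1) z.2) (atTop ×ˢ 𝓝 x) (𝓝 (fp p μ x)))
    {C : ℕ → Set X} {C' : Set X} (hLs : KurLs C ⊆ C') (hLi : C' ⊆ KurLi C) :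
    KurLs (fun n => Fp p (ν n) (C n)) ⊆ Fp p μ C' := by
  intro x hx
  refine ⟨hLs (kurLs_mono (fun n => sep_subset _ _) hx), fun x' hx' => ?_⟩
  by_contra! hlt
  obtain ⟨c, hc', hc⟩ := exists_between hlt
  obtain ⟨pa, hpa, pb, hpb, hbelow⟩ :=
    eventually_prod_iff.1 ((hconv x').eventually (gt_mem_nhds hc'))
  have hbelow' : ∀ᶠ n in atTop, ∃ z ∈ C n, fp p (ν n) z < c :=
    (hpa.and (eventually_exists_mem_of_mem_kurLi (hLi hx') hpb)).mono
      fun _ ⟨hn, z, hzC, hz⟩ => ⟨z, hzC, hbelow hn hz⟩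
  have habove := (hconv x).eventually (lt_mem_nhds hc)
  obtain ⟨⟨_, y⟩, ⟨-, hymin⟩, hy, z, hzC, hz⟩ := ((frequently_of_mem_kurLs hx).and_eventually
    (habove.and (tendsto_fst.eventually hbelow'))).exists
  exact (hymin z hzC).not_gt (hz.trans hy)

end Deterministic

section Support

variable {X : Type*} [MetricSpace X] [MeasurableSpace X]

lemma msupport_eq_support (μ : Measure X) : msupport μ = μ.support := by
  ext x
  rw [Measure.mem_support_iff_forall]
  refine ⟨fun h U hU => ?_, fun h U hUo hxU => h U (hUo.mem_nhds hxU)⟩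
  obtain ⟨V, hVU, hVo, hxV⟩ := _root_.mem_nhds_iff.1 hU
  exact (h V hVo hxV).trans_le (measure_mono hVU)

lemma isClosed_msupport (μ : Measure X) : IsClosed (msupport μ) :=
  msupport_eq_support μ ▸ Measure.isClosed_support

end Support

section EmpiricalMeasure

variable {X Ω : Type*} [MeasurableSpace X] (Y : ℕ → Ω → X) (ω : Ω) {n : ℕ}

lemma empMeasure_pos_iff {U : Set X} (hU : MeasurableSet U) :
    0 < empMeasure Y n ω U ↔ ∃ i < n, Y i ω ∈ U := by
  simp [empMeasure, Measure.dirac_apply' _ hU, pos_iff_ne_zero]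

lemma isProbabilityMeasure_empMeasure (hn : n ≠ 0) : IsProbabilityMeasure (empMeasure Y n ω) :=
  ⟨by simp [empMeasure, ENNReal.inv_mul_cancel, hn]⟩

section EmpiricalSupport

variable [MetricSpace X] [OpensMeasurableSpace X]

lemma mem_msupport_empMeasure {i : ℕ} (hi : i < n) : Y i ω ∈ msupport (empMeasure Y n ω) :=
  fun _ hU hiU => (empMeasure_pos_iff Y ω hU.measurableSet).2 ⟨i, hi, hiU⟩

lemma msupport_empMeasure_subset {μ : Measure X} (hY : ∀ i, Y i ω ∈ msupport μ) :
    msupport (empMeasure Y n ω) ⊆ msupport μ := by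
  simp only [msupport_eq_support] at hY ⊢
  refine Measure.support_subset_of_isClosed Measure.isClosed_support (mem_ae_iff.2 ?_)
  by_contra h
  obtain ⟨i, -, hi⟩ := (empMeasure_pos_iff Y ω
    Measure.isClosed_support.isOpen_compl.measurableSet).1 (pos_iff_ne_zero.2 h)
  exact hi (hY i)

end EmpiricalSupport

variable [MeasurableSingletonClass X]

lemma integrable_empMeasure (hn : n ≠ 0) (f : X → ℝ) : Integrable f (empMeasure Y n ω) :=
  (integrable_finsetSum_measure.2 fun _ _ => integrable_dirac enorm_lt_top).smul_measure
    (by simpa using hn)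

lemma integral_empMeasure (f : X → ℝ) :
    ∫ y, f y ∂(empMeasure Y n ω) = (∑ i ∈ Finset.range n, f (Y i ω)) / n := by
  rw [empMeasure, integral_smul_measure,
    integral_finsetSum_measure fun _ _ => integrable_dirac enorm_lt_top]
  simp [integral_dirac, div_eq_inv_mul]

end EmpiricalMeasure

section IID

variable {X Ω : Type*} [MeasurableSpace X] [MeasurableSpace Ω]
  {P : Measure Ω} {μ : Measure X} {Y : ℕ → Ω → X}

lemma ae_exists_mem_of_measure_pos [IsProbabilityMeasure μ] (hYmeas : ∀ i, Measurable (Y i))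
    (hindep : iIndepFun Y P) (hlaw : ∀ i, Measure.map (Y i) P = μ) {B : Set X}
    (hB : MeasurableSet B) (hμB : 0 < μ B) :
    ∀ᵐ ω ∂P, ∃ i, Y i ω ∈ B := by
  have hmiss : ∀ n, P (⋂ i ∈ Finset.range n, Y i ⁻¹' Bᶜ) = μ Bᶜ ^ n := fun n => by
    have hYB : ∀ i, P (Y i ⁻¹' Bᶜ) = μ Bᶜ := fun i => by
      rw [← hlaw i, Measure.map_apply (hYmeas i) hB.compl]
    rw [hindep.measure_inter_preimage_eq_mul _ fun _ _ => hB.compl]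
    simp only [hYB, Finset.prod_const, Finset.card_range]
  have hlt : μ Bᶜ < 1 := by
    rw [prob_compl_eq_one_sub hB]
    exact ENNReal.sub_lt_self ENNReal.one_ne_top one_ne_zero hμB.ne'
  rw [ae_iff]
  refine le_antisymm (ge_of_tendsto' (ENNReal.tendsto_pow_atTop_nhds_zero_of_lt_one hlt)
    fun n => (measure_mono ?_).trans_eq (hmiss n)) zero_le
  intro ω hω
  simp only [mem_ofPred_eq, not_exists] at hω
  simpa using fun i _ => hω i

variable [MetricSpace X]

lemma ae_forall_mem_msupport [SecondCountableTopology X] (hYmeas : ∀ i, Measurable (Y i))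
    (hlaw : ∀ i, Measure.map (Y i) P = μ) :
    ∀ᵐ ω ∂P, ∀ i, Y i ω ∈ msupport μ :=
  ae_all_iff.2 fun i => ae_of_ae_map (hYmeas i).aemeasurable <| by
    rw [hlaw i, msupport_eq_support]
    exact Measure.support_mem_ae

variable [BorelSpace X]

lemma ae_tendsto_fp_empMeasure (hYmeas : ∀ i, Measurable (Y i)) (hindep : iIndepFun Y P)
    (hlaw : ∀ i, Measure.map (Y i) P = μ) {p : ℝ} {q : X}
    (hq : Integrable (fun y => dist q y ^ p) μ) :
    ∀ᵐ ω ∂P, Tendsto (fun n => fp p (empMeasure Y n ω) q) atTop (𝓝 (fp p μ q)) := by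
  have hf : Measurable fun y => dist q y ^ p :=
    (continuous_const.dist continuous_id).measurable.pow_const p
  have hint : Integrable (fun ω => dist q (Y 0 ω) ^ p) P := by
    rw [← hlaw 0] at hq
    exact hq.comp_measurable (hYmeas 0)
  have hmean : P[fun ω => dist q (Y 0 ω) ^ p] = fp p μ q := by
    rw [fp, ← hlaw 0, integral_map (hYmeas 0).aemeasurable hf.aestronglyMeasurable]
  have hslln := strong_law_ae_real (fun i ω => dist q (Y i ω) ^ p) hint
    (fun i j hij => (hindep.indepFun hij).comp hf hf)
    (fun i => (IdentDistrib.mk (hYmeas i).aemeasurable (hYmeas 0).aemeasurable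
      (by rw [hlaw i, hlaw 0])).comp hf)
  filter_upwards [hslln] with ω hω
  simpa only [fp, integral_empMeasure, hmean] using hω

lemma ae_msupport_subset_kurLi [SecondCountableTopology X] [IsProbabilityMeasure μ]
    (hYmeas : ∀ i, Measurable (Y i)) (hindep : iIndepFun Y P)
    (hlaw : ∀ i, Measure.map (Y i) P = μ) :
    ∀ᵐ ω ∂P, msupport μ ⊆ KurLi (fun n => msupport (empMeasure Y (n + 1) ω)) := by
  obtain ⟨B, hBc, -, hB⟩ := TopologicalSpace.exists_countable_basis X
  have hhit : ∀ᵐ ω ∂P, ∀ V ∈ {V ∈ B | 0 < μ V}, ∃ i, Y i ω ∈ V :=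
    (ae_ball_iff (hBc.mono (sep_subset _ _))).2 fun V hV =>
      ae_exists_mem_of_measure_pos hYmeas hindep hlaw (hB.isOpen hV.1).measurableSet hV.2
  filter_upwards [hhit] with ω hω x hx ε hε
  obtain ⟨V, hVB, hxV, hVε⟩ := hB.exists_subset_of_mem_open (mem_ball_self hε) isOpen_ball
  obtain ⟨i, hi⟩ := hω V ⟨hVB, hx V (hB.isOpen hVB) hxV⟩
  filter_upwards [eventually_ge_atTop i] with n hn
  exact ⟨Y i ω, mem_msupport_empMeasure Y ω (Nat.lt_succ_of_le hn), mem_ball'.1 (hVε hi)⟩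

end IID

theorem frechet_stmt14_general {X : Type*} [MetricSpace X] [TopologicalSpace.SeparableSpace X]
    [MeasurableSpace X] [BorelSpace X]
    (p : ℝ) (hp : 1 ≤ p)
    (μ : Measure X) (hμprob : IsProbabilityMeasure μ) (hμPp : MemPp p μ)
    {Ω : Type*} [MeasurableSpace Ω] (P : Measure Ω)
    (Y : ℕ → Ω → X) (hYmeas : ∀ i, Measurable (Y i))
    (hindep : iIndepFun Y P)
    (hlaw : ∀ i, Measure.map (Y i) P = μ) :
    ∀ᵐ ω ∂P,
      KurLs (fun n => Fp p (empMeasure Y (n + 1) ω) Set.univ) ⊆ Fp p μ Set.univ ∧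
      KurLs (fun n => Fp p (empMeasure Y (n + 1) ω) (msupport (empMeasure Y (n + 1) ω)))
        ⊆ Fp p μ (msupport μ) := by
  obtain ⟨D, hDc, hD⟩ := TopologicalSpace.exists_countable_dense X
  have hfpD : ∀ᵐ ω ∂P, ∀ q ∈ D,
      Tendsto (fun n => fp p (empMeasure Y (n + 1) ω) q) atTop (𝓝 (fp p μ q)) :=
    (ae_ball_iff hDc).2 fun q _ => (ae_tendsto_fp_empMeasure hYmeas hindep hlaw (hμPp q)).mono
      fun _ h => h.comp (tendsto_add_atTop_nat 1)
  filter_upwards [hfpD, ae_forall_mem_msupport hYmeas hlaw,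
    ae_msupport_subset_kurLi hYmeas hindep hlaw] with ω hfp hsupp hLi
  have hconv := tendsto_fp_uncurry_of_tendsto_on_dense hp
    (fun n => isProbabilityMeasure_empMeasure Y ω n.succ_ne_zero)
    (fun n x => integrable_empMeasure Y ω n.succ_ne_zero _) hμPp hD hfp
  exact ⟨kurLs_Fp_subset hconv (subset_univ _) (subset_kurLi_const univ),
    kurLs_Fp_subset hconv (kurLs_subset_of_isClosed (isClosed_msupport μ)
      fun _ => msupport_empMeasure_subset Y ω hsupp) hLi⟩

theorem frechet_stmt14 {X : Type*} [MetricSpace X] [TopologicalSpace.SeparableSpace X]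
    [MeasurableSpace X] [BorelSpace X]
    (p : ℝ) (hp : 1 ≤ p)
    (μ : Measure X) (hμprob : IsProbabilityMeasure μ) (hμPp : MemPp p μ)
    {Ω : Type*} [MeasurableSpace Ω] (P : Measure Ω) (hPprob : IsProbabilityMeasure P)
    (Y : ℕ → Ω → X) (hYmeas : ∀ i, Measurable (Y i))
    (hindep : iIndepFun Y P)
    (hlaw : ∀ i, Measure.map (Y i) P = μ) :
    ∀ᵐ ω ∂P,
      KurLs (fun n => Fp p (empMeasure Y (n + 1) ω) Set.univ) ⊆ Fp p μ Set.univ ∧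
      KurLs (fun n => Fp p (empMeasure Y (n + 1) ω) (msupport (empMeasure Y (n + 1) ω)))
        ⊆ Fp p μ (msupport μ) :=
  frechet_stmt14_general p hp μ hμprob hμPp P Y hYmeas hindep hlaw
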